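/- arXiv:2308.15415 — 3 statements merged into one kernel-verified Lean document; each statement's English description precedes it below -/
import Mathlib

section
/- R(n) = √(n+1) holds if and only if n = F_m^2 − 1 for some integer m ≥ 2. -/
set_option maxHeartbeats 1000000

/-- Number of representations of `n` as a sum of distinct Fibonacci numbers. -/
noncomputable def R (n : ℕ) : ℕ :=
  Nat.card {s : Finset ℕ // (∀ x ∈ s, 0 < x ∧ ∃ m, Nat.fib m = x) ∧ ∑ x ∈ s, x = n}

noncomputable def A (H : ℕ) : ℕ := ∑ n ∈ Finset.range (H + 1), R n

noncomputable def V (H : ℕ) : ℕ := ∑ n ∈ Finset.range (H + 1), (R n) ^ 2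

open Nat Finset

def fibs (k : ℕ) : Finset ℕ := (Finset.Icc 2 k).image Nat.fib

lemma mem_fibs {k x : ℕ} : x ∈ fibs k ↔ ∃ m, 2 ≤ m ∧ m ≤ k ∧ Nat.fib m = x := by
  simp [fibs, and_assoc]

lemma fib_lt_fib {a b : ℕ} (ha : 2 ≤ a) (hab : a < b) : Nat.fib a < Nat.fib b := by
  calc Nat.fib a < Nat.fib (a+1) := Nat.fib_lt_fib_succ ha
  _ ≤ Nat.fib b := Nat.fib_mono hab

def N (t : Finset ℕ) (n : ℕ) : ℕ := ((t.powerset).filter (fun s => ∑ x ∈ s, x = n)).card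

lemma R_eq_N {k n : ℕ} (hk : 2 ≤ k) (hn : n < Nat.fib (k+1)) : R n = N (fibs k) n := by
  have key : ∀ s : Finset ℕ,
      ((∀ x ∈ s, 0 < x ∧ ∃ m, Nat.fib m = x) ∧ ∑ x ∈ s, x = n) ↔
      (s ∈ (fibs k).powerset.filter (fun s => ∑ x ∈ s, x = n)) := by
    intro s
    rw [Finset.mem_filter, Finset.mem_powerset]
    constructor
    · rintro ⟨h1, h2⟩
      refine ⟨fun x hx => ?_, h2⟩
      obtain ⟨hxpos, m, hm⟩ := h1 x hx
      have hxn : x ≤ n := h2 ▸ Finset.single_le_sum (f := fun x => x) (fun i _ => Nat.zero_le i) hx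
      -- find m' with 2 ≤ m', fib m' = x
      have hm' : ∃ m', 2 ≤ m' ∧ Nat.fib m' = x := by
        rcases Nat.lt_or_ge m 2 with h | h
        · interval_cases m
          · simp at hm; omega
          · exact ⟨2, le_refl 2, hm⟩
        · exact ⟨m, h, hm⟩
      obtain ⟨m', hm'2, hm'f⟩ := hm'
      rw [mem_fibs]
      refine ⟨m', hm'2, ?_, hm'f⟩
      by_contra hcon
      have := Nat.fib_mono (show k+1 ≤ m' by omega)
      omega
    · rintro ⟨h1, h2⟩
      refine ⟨fun x hx => ?_, h2⟩
      obtain ⟨m, hm2, hmk, hfm⟩ := mem_fibs.mp (h1 hx)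
      have : 0 < Nat.fib m := Nat.fib_pos.mpr (by omega)
      exact ⟨by omega, m, hfm⟩
  rw [R, Nat.card_congr (Equiv.subtypeEquivRight key), Nat.card_eq_finsetCard]
  rfl

lemma N_eq_zero {t : Finset ℕ} {n : ℕ} (h : ∑ x ∈ t, x < n) : N t n = 0 := by
  rw [N, Finset.card_eq_zero, Finset.filter_eq_empty_iff]
  intro s hs
  rw [Finset.mem_powerset] at hs
  have h2 : ∑ x ∈ s, x ≤ ∑ x ∈ t, x := Finset.sum_le_sum_of_subset hs
  omega

lemma N_insert {a : ℕ} {t : Finset ℕ} {n : ℕ} (ha : a ∉ t) (han : a ≤ n) :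
    N (insert a t) n = N t n + N t (n - a) := by
  classical
  have hdisj : Disjoint ((t.powerset).filter (fun s => ∑ x ∈ s, x = n))
      (((t.powerset.image (insert a))).filter (fun s => ∑ x ∈ s, x = n)) := by
    rw [Finset.disjoint_left]
    intro s hs hs'
    simp only [Finset.mem_filter, Finset.mem_powerset, Finset.mem_image] at hs hs'
    obtain ⟨⟨u, hu, hus⟩, _⟩ := hs'
    have : a ∈ s := hus ▸ Finset.mem_insert_self a u
    exact ha (hs.1 this)
  rw [N, Finset.powerset_insert, Finset.filter_union, Finset.card_union_of_disjoint hdisj, N, N]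
  congr 1
  rw [Finset.filter_image, Finset.card_image_of_injOn]
  · congr 1
    ext s
    simp only [Finset.mem_filter, Finset.mem_powerset]
    constructor
    · rintro ⟨hs, hsum⟩
      have has : a ∉ s := fun h => ha (hs h)
      rw [Finset.sum_insert has] at hsum
      exact ⟨hs, by omega⟩
    · rintro ⟨hs, hsum⟩
      have has : a ∉ s := fun h => ha (hs h)
      rw [Finset.sum_insert has]
      exact ⟨hs, by omega⟩
  · intro s hs s' hs' hss
    simp only [Finset.coe_filter, Set.mem_setOf_eq, Finset.mem_powerset] at hs hs'
    have has : a ∉ s := fun h => ha (hs.1 h)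
    have has' : a ∉ s' := fun h => ha (hs'.1 h)
    have := congrArg (Finset.erase · a) hss
    simpa [Finset.erase_insert has, Finset.erase_insert has'] using this

lemma N_compl {t : Finset ℕ} {n : ℕ} (hn : n ≤ ∑ x ∈ t, x) :
    N t n = N t (∑ x ∈ t, x - n) := by
  classical
  rw [N, N]
  apply Finset.card_bij' (fun s _ => t \ s) (fun s _ => t \ s)
  · intro s hs
    simp only [Finset.mem_filter, Finset.mem_powerset] at hs ⊢
    refine ⟨Finset.sdiff_subset, ?_⟩
    have h2 : ∑ x ∈ t \ s, x + ∑ x ∈ s, x = ∑ x ∈ t, x := Finset.sum_sdiff hs.1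
    omega
  · intro s hs
    simp only [Finset.mem_filter, Finset.mem_powerset] at hs ⊢
    refine ⟨Finset.sdiff_subset, ?_⟩
    have h2 : ∑ x ∈ t \ s, x + ∑ x ∈ s, x = ∑ x ∈ t, x := Finset.sum_sdiff hs.1
    omega
  · intro s hs
    simp only [Finset.mem_filter, Finset.mem_powerset] at hs
    exact Finset.sdiff_sdiff_eq_self hs.1
  · intro s hs
    simp only [Finset.mem_filter, Finset.mem_powerset] at hs
    exact Finset.sdiff_sdiff_eq_self hs.1

lemma fibs_succ {k : ℕ} (hk : 2 ≤ k) :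
    fibs (k+1) = insert (Nat.fib (k+1)) (fibs k) := by
  unfold fibs
  rw [← Finset.insert_Icc_right_eq_Icc_add_one (by omega : 2 ≤ k+1)]
  rw [Finset.image_insert]

lemma fib_notMem_fibs {k : ℕ} : Nat.fib (k+1) ∉ fibs k := by
  rw [mem_fibs]
  rintro ⟨m, hm2, hmk, hfm⟩
  have := fib_lt_fib hm2 (show m < k+1 by omega)
  omega

lemma sum_fibs {k : ℕ} (hk : 2 ≤ k) : (∑ x ∈ fibs k, x) + 2 = Nat.fib (k+2) := by
  induction k with
  | zero => omega
  | succ k ih =>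
    rcases Nat.lt_or_ge k 2 with h | h
    · interval_cases k
      · omega
      · decide
    · rw [fibs_succ h, Finset.sum_insert fib_notMem_fibs]
      have h1 := ih h
      have h2 : Nat.fib (k+1+2) = Nat.fib (k+1) + Nat.fib (k+2) := Nat.fib_add_two
      omega

lemma R_rec {k n : ℕ} (hk : 3 ≤ k) (h1 : Nat.fib k ≤ n) (h2 : n + 2 ≤ Nat.fib (k+1)) :
    R n = R (n - Nat.fib k) + R (Nat.fib (k+1) - 2 - n) := by
  obtain ⟨j, rfl⟩ : ∃ j, k = j + 1 := ⟨k-1, by omega⟩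
  rw [show j+1+1 = j+2 from rfl] at *
  have hj : 2 ≤ j := by omega
  have hfib : Nat.fib (j+2) = Nat.fib j + Nat.fib (j+1) := Nat.fib_add_two
  have hI : Nat.fib (j+1+1) = Nat.fib (j+2) := rfl
  have hmono : Nat.fib (j+1) ≤ Nat.fib (j+2) := Nat.fib_mono (by omega)
  have hmono' : Nat.fib j ≤ Nat.fib (j+1) := Nat.fib_mono (by omega)
  have hfibj1 : 0 < Nat.fib (j+1) := Nat.fib_pos.mpr (by omega)
  have hfibj : 0 < Nat.fib j := Nat.fib_pos.mpr (by omega)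
  have hsum : (∑ x ∈ fibs j, x) + 2 = Nat.fib (j+2) := sum_fibs hj
  have e1 : R n = N (fibs (j+1)) n := R_eq_N (by omega) (by omega)
  rw [e1, fibs_succ hj, N_insert fib_notMem_fibs h1]
  have e2 : N (fibs j) n = N (fibs j) (Nat.fib (j+2) - 2 - n) := by
    rw [N_compl (by omega)]
    congr 1
    omega
  rw [e2]
  have e3 : R (n - Nat.fib (j+1)) = N (fibs j) (n - Nat.fib (j+1)) :=
    R_eq_N hj (by omega)
  have e4 : R (Nat.fib (j+2) - 2 - n) = N (fibs j) (Nat.fib (j+2) - 2 - n) :=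
    R_eq_N hj (by omega)
  omega

lemma R_edge {k n : ℕ} (hk : 3 ≤ k) (h1 : Nat.fib k ≤ n) (h2 : n + 1 = Nat.fib (k+1)) :
    R n = R (n - Nat.fib k) := by
  obtain ⟨j, rfl⟩ : ∃ j, k = j + 1 := ⟨k-1, by omega⟩
  rw [show j+1+1 = j+2 from rfl] at *
  have hj : 2 ≤ j := by omega
  have hfib : Nat.fib (j+2) = Nat.fib j + Nat.fib (j+1) := Nat.fib_add_two
  have hI : Nat.fib (j+1+1) = Nat.fib (j+2) := rfl
  have hmono : Nat.fib (j+1) ≤ Nat.fib (j+2) := Nat.fib_mono (by omega)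
  have hmono' : Nat.fib j ≤ Nat.fib (j+1) := Nat.fib_mono (by omega)
  have hfibj1 : 0 < Nat.fib (j+1) := Nat.fib_pos.mpr (by omega)
  have hfibj : 0 < Nat.fib j := Nat.fib_pos.mpr (by omega)
  have hsum : (∑ x ∈ fibs j, x) + 2 = Nat.fib (j+2) := sum_fibs hj
  have e1 : R n = N (fibs (j+1)) n := R_eq_N (by omega) (by omega)
  rw [e1, fibs_succ hj, N_insert fib_notMem_fibs h1]
  have e2 : N (fibs j) n = 0 := N_eq_zero (by omega)
  have e3 : R (n - Nat.fib (j+1)) = N (fibs j) (n - Nat.fib (j+1)) :=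
    R_eq_N hj (by omega)
  omega

lemma R_zero : R 0 = 1 := by
  rw [R_eq_N (k := 2) le_rfl (by decide)]
  decide

lemma R_one : R 1 = 1 := by
  rw [R_eq_N (k := 2) le_rfl (by decide)]
  decide

lemma R_two : R 2 = 1 := by
  rw [R_eq_N (k := 3) (by omega) (by decide)]
  decide

lemma R_three : R 3 = 2 := by
  rw [R_eq_N (k := 4) (by omega) (by decide)]
  decide

lemma exists_k {n : ℕ} (hn : 1 ≤ n) : ∃ k, 2 ≤ k ∧ Nat.fib k ≤ n ∧ n < Nat.fib (k+1) := by
  induction n with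
  | zero => omega
  | succ n ih =>
    rcases Nat.eq_or_lt_of_le hn with h | h
    · exact ⟨2, by omega, by simp [← h], by rw [← h]; decide⟩
    · obtain ⟨k, hk2, hk1, hk2'⟩ := ih (by omega)
      rcases Nat.lt_or_ge (n+1) (Nat.fib (k+1)) with h' | h'
      · exact ⟨k, hk2, by omega, h'⟩
      · refine ⟨k+1, by omega, h', ?_⟩
        have := Nat.fib_lt_fib_succ (show 2 ≤ k+1 by omega)
        omega

def luc : ℕ → ℕ
  | 0 => 2
  | 1 => 1
  | n+2 => luc n + luc (n+1)

lemma luc_add_two (n : ℕ) : luc (n+2) = luc n + luc (n+1) := rfl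

-- Cassini over ℤ
lemma cassini (n : ℕ) :
    (Nat.fib (n+2) : ℤ) * Nat.fib n = (Nat.fib (n+1) : ℤ)^2 + (-1)^(n+1) := by
  induction n with
  | zero => decide
  | succ n ih =>
    have h1 : (Nat.fib (n+3) : ℤ) = Nat.fib (n+1) + Nat.fib (n+2) := by
      exact_mod_cast congrArg (Nat.cast (R := ℤ)) (Nat.fib_add_two (n := n+1))
    have h2 : (Nat.fib (n+2) : ℤ) = Nat.fib n + Nat.fib (n+1) := by
      exact_mod_cast congrArg (Nat.cast (R := ℤ)) (Nat.fib_add_two (n := n))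
    have : ((-1 : ℤ))^(n+2) = -((-1)^(n+1)) := by ring
    rw [show n+1+2 = n+3 from rfl, show n+1+1 = n+2 from rfl, this, h1]
    nlinarith [ih, h2]

-- luc in terms of fib
lemma luc_fib (n : ℕ) : luc (n+1) = Nat.fib n + Nat.fib (n+2) := by
  induction n using Nat.twoStepInduction with
  | zero => decide
  | one => decide
  | more n ih1 ih2 =>
    rw [show n+2+1 = (n+1)+2 from rfl, luc_add_two, ih1, ih2]
    rw [show n+2+2 = (n+2)+2 from rfl, Nat.fib_add_two (n := n+2),
        Nat.fib_add_two (n := n)]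
    ring

-- luc m + fib m = 2 fib (m+1)
lemma luc_two_fib (n : ℕ) : luc n + Nat.fib n = 2 * Nat.fib (n+1) := by
  induction n using Nat.twoStepInduction with
  | zero => decide
  | one => decide
  | more n ih1 ih2 =>
    rw [luc_add_two, Nat.fib_add_two (n := n), Nat.fib_add_two (n := n+1)]
    omega

-- L_n^2 = 5 F_n^2 + 4 (-1)^n over ℤ
lemma luc_sq (n : ℕ) : (luc n : ℤ)^2 = 5 * (Nat.fib n : ℤ)^2 + 4 * (-1)^n := by
  cases n with
  | zero => decide
  | succ n =>
    have h := cassini n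
    have hl : (luc (n+1) : ℤ) = Nat.fib n + Nat.fib (n+2) := by
      exact_mod_cast congrArg (Nat.cast (R := ℤ)) (luc_fib n)
    have h2 : (Nat.fib (n+2) : ℤ) = Nat.fib n + Nat.fib (n+1) := by
      exact_mod_cast congrArg (Nat.cast (R := ℤ)) (Nat.fib_add_two (n := n))
    have hpow : ((-1 : ℤ))^(n+1) = -((-1)^n) := by ring
    rw [hl, h2]
    rw [h2, hpow] at h
    nlinarith [h]

-- L_{2j} = 5 F_j^2 + 2(-1)^j over ℤ, for j ≥ 1
lemma luc_two_mul (j : ℕ) (hj : 1 ≤ j) :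
    (luc (2*j) : ℤ) = 5 * (Nat.fib j : ℤ)^2 + 2 * (-1)^j := by
  obtain ⟨i, rfl⟩ : ∃ i, j = i + 1 := ⟨j-1, by omega⟩
  have hl : luc (2*(i+1)) = Nat.fib (2*i+1) + Nat.fib (2*i+3) := by
    rw [show 2*(i+1) = (2*i+1)+1 from by ring]
    rw [luc_fib]
  have f1 : Nat.fib (2*i+1) = Nat.fib i * Nat.fib i + Nat.fib (i+1) * Nat.fib (i+1) := by
    rw [show 2*i+1 = i + i + 1 from by ring, Nat.fib_add]
  have f2 : Nat.fib (2*i+3) = Nat.fib (i+1) * Nat.fib (i+1) + Nat.fib (i+2) * Nat.fib (i+2) := by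
    rw [show 2*i+3 = (i+1) + (i+1) + 1 from by ring, Nat.fib_add]
  have h := cassini i
  have h2 : (Nat.fib (i+2) : ℤ) = Nat.fib i + Nat.fib (i+1) := by
    exact_mod_cast congrArg (Nat.cast (R := ℤ)) (Nat.fib_add_two (n := i))
  have hcast : (luc (2*(i+1)) : ℤ) =
      (Nat.fib i : ℤ) * Nat.fib i + (Nat.fib (i+1) : ℤ) * Nat.fib (i+1)
      + ((Nat.fib (i+1) : ℤ) * Nat.fib (i+1) + (Nat.fib (i+2) : ℤ) * Nat.fib (i+2)) := by
    rw [hl] at *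
    push_cast [f1, f2]
    ring
  have hpow : ((-1 : ℤ))^(i+1) = -((-1)^i) := by ring
  rw [hcast, hpow]
  rw [hpow] at h
  nlinarith [h, h2]

-- luc (2j) mod 5 ∈ {2,3}
lemma luc_two_mul_mod5 (j : ℕ) (hj : 1 ≤ j) : luc (2*j) % 5 = 2 ∨ luc (2*j) % 5 = 3 := by
  have h := luc_two_mul j hj
  rcases Nat.even_or_odd j with he | ho
  · have : ((-1 : ℤ))^j = 1 := he.neg_one_pow
    rw [this] at h
    have h' : luc (2*j) = 5 * (Nat.fib j)^2 + 2 := by exact_mod_cast h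
    omega
  · have : ((-1 : ℤ))^j = -1 := ho.neg_one_pow
    rw [this] at h
    have hf : 1 ≤ Nat.fib j := Nat.fib_pos.mpr (by omega)
    have h' : luc (2*j) + 2 = 5 * (Nat.fib j)^2 := by
      have : (luc (2*j) : ℤ) + 2 = 5 * (Nat.fib j : ℤ)^2 := by linarith [h]
      exact_mod_cast this
    omega

-- F_{2j+2} + F_j^2 = F_{j+2}^2
lemma fib_sq_even (j : ℕ) : Nat.fib (2*j+2) + Nat.fib j ^2 = Nat.fib (j+2)^2 := by
  have f1 : Nat.fib (2*j+2) = Nat.fib j * Nat.fib (j+1) + Nat.fib (j+1) * Nat.fib (j+2) := by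
    rw [show 2*j+2 = j + (j+1) + 1 from by ring, Nat.fib_add]
  have h2 : Nat.fib (j+2) = Nat.fib j + Nat.fib (j+1) := Nat.fib_add_two
  rw [f1, h2]
  ring

-- F_{2j+3} = F_{j+1}^2 + F_{j+2}^2
lemma fib_sq_odd (j : ℕ) : Nat.fib (2*j+3) = Nat.fib (j+1)^2 + Nat.fib (j+2)^2 := by
  rw [show 2*j+3 = (j+1) + (j+1) + 1 from by ring, Nat.fib_add]
  ring

lemma key_arith {j a b : ℕ} (hj : 2 ≤ j) (hab : a + b = Nat.fib (j+1)) :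
    4*a*b ≤ (Nat.fib j + a)^2 ∧
    (4*a*b = (Nat.fib j + a)^2 → ∃ i, 1 ≤ i ∧ j = 2*i ∧ a = Nat.fib i ^2) := by
  set F := Nat.fib j with hF
  set G := Nat.fib (j+1) with hG
  set L := luc j with hLdef
  have hbz : (b:ℤ) = (G:ℤ) - a := by
    have : (a:ℤ) + b = G := by exact_mod_cast congrArg (Nat.cast (R := ℤ)) hab
    linarith
  have hLz : (L:ℤ) = 2*(G:ℤ) - F := by
    have : (L:ℤ) + F = 2*G := by exact_mod_cast congrArg (Nat.cast (R := ℤ)) (luc_two_fib j)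
    linarith
  have hsq := luc_sq j
  rw [hLz] at hsq
  have hmain : 5*((((F:ℤ))+a)^2 - 4*(a:ℤ)*b) = (5*(a:ℤ) - L)^2 - 4*(-1)^j := by
    rw [hbz, hLz]
    linear_combination -hsq
  -- the inequality part
  have hineq : 4*(a:ℤ)*b ≤ ((F:ℤ)+a)^2 := by
    rcases Nat.even_or_odd j with he | ho
    · obtain ⟨i, hi⟩ := id he
      have hi1 : 1 ≤ i := by omega
      have hji : j = 2*i := by omega
      have hmod := luc_two_mul_mod5 i hi1
      rw [← hji] at hmod
      rw [← hLdef] at hmod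
      have hdiv : L = 5*(L/5) + L % 5 := by omega
      have hq : (L:ℤ) = 5*((L/5 : ℕ):ℤ) + ((L % 5 : ℕ):ℤ) := by exact_mod_cast hdiv
      have hr : ((L % 5 : ℕ):ℤ) = 2 ∨ ((L % 5 : ℕ):ℤ) = 3 := by
        rcases hmod with h | h <;> [left; right] <;> exact_mod_cast h
      have hd : 5*(a:ℤ) - L ≥ 2 ∨ 5*(a:ℤ) - L ≤ -2 := by
        rcases hr with h | h <;> omega
      have hd2 : (5*(a:ℤ) - L)^2 ≥ 4 := by
        rcases hd with h | h <;> nlinarith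
      have hev : ((-1:ℤ))^j = 1 := he.neg_one_pow
      rw [hev] at hmain
      nlinarith [hmain, hd2]
    · have hod : ((-1:ℤ))^j = -1 := ho.neg_one_pow
      rw [hod] at hmain
      nlinarith [hmain, sq_nonneg (5*(a:ℤ) - L)]
  constructor
  · exact_mod_cast hineq
  · intro heq
    have heqz : 4*(a:ℤ)*b = ((F:ℤ)+a)^2 := by exact_mod_cast heq
    have hd4 : (5*(a:ℤ) - L)^2 = 4*(-1)^j := by linarith [hmain]
    rcases Nat.even_or_odd j with he | ho
    · obtain ⟨i, hi⟩ := id he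
      have hi1 : 1 ≤ i := by omega
      have hji : j = 2*i := by omega
      have hev : ((-1:ℤ))^j = 1 := he.neg_one_pow
      rw [hev] at hd4
      have hd : 5*(a:ℤ) - L = 2 ∨ 5*(a:ℤ) - L = -2 := by
        have h0 : (5*(a:ℤ) - L - 2) * (5*(a:ℤ) - L + 2) = 0 := by linear_combination hd4
        rcases _root_.mul_eq_zero.mp h0 with h | h
        · left; linarith
        · right; linarith
      have hLi := luc_two_mul i hi1
      rw [← hji, ← hLdef] at hLi
      have hsz : (Nat.fib i : ℤ)^2 = ((Nat.fib i ^ 2 : ℕ):ℤ) := by push_cast; ring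
      rw [hsz] at hLi
      refine ⟨i, hi1, hji, ?_⟩
      have : (a:ℤ) = ((Nat.fib i ^ 2 : ℕ):ℤ) := by
        rcases Nat.even_or_odd i with hie | hio
        · have h1 : ((-1:ℤ))^i = 1 := hie.neg_one_pow
          rw [h1] at hLi
          rcases hd with h | h <;> omega
        · have h1 : ((-1:ℤ))^i = -1 := hio.neg_one_pow
          rw [h1] at hLi
          rcases hd with h | h <;> omega
      exact_mod_cast this
    · have hod : ((-1:ℤ))^j = -1 := ho.neg_one_pow
      rw [hod] at hd4
      nlinarith [sq_nonneg (5*(a:ℤ) - L), hd4]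

lemma sq_le_of_sq {x y : ℕ} (h : x^2 ≤ y^2) : x ≤ y := by
  by_contra hc
  push_neg at hc
  nlinarith

lemma master : ∀ n : ℕ, R n ^ 2 ≤ n + 1 ∧
    (R n ^ 2 = n + 1 → ∃ m, 2 ≤ m ∧ n + 1 = Nat.fib m ^ 2) := by
  intro n
  induction n using Nat.strong_induction_on with
  | _ n ih =>
  rcases Nat.lt_or_ge n 3 with hsmall | hbig
  · interval_cases n
    · exact ⟨by simp [R_zero], fun _ => ⟨2, by norm_num, by decide⟩⟩
    · exact ⟨by simp [R_one], fun h => by simp [R_one] at h⟩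
    · exact ⟨by simp [R_two], fun h => by simp [R_two] at h⟩
  obtain ⟨n0, rfl⟩ : ∃ n0, n = n0 + 3 := ⟨n-3, by omega⟩
  set n' := n0 + 3 with hn'
  obtain ⟨k, hk2, hfk, hfk1⟩ := exists_k (show 1 ≤ n' by omega)
  have hk4 : 4 ≤ k := by
    by_contra hc
    have : Nat.fib (k+1) ≤ Nat.fib 4 := Nat.fib_mono (by omega)
    have : Nat.fib 4 = 3 := by decide
    omega
  obtain ⟨j, rfl⟩ : ∃ j, k = j + 2 := ⟨k-2, by omega⟩
  have hj2 : 2 ≤ j := by omega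
  have hI : Nat.fib (j+2+1) = Nat.fib (j+3) := rfl
  have hfa : Nat.fib (j+2) = Nat.fib j + Nat.fib (j+1) := Nat.fib_add_two
  have hfb : Nat.fib (j+3) = Nat.fib (j+1) + Nat.fib (j+2) := Nat.fib_add_two
  have hfjpos : 0 < Nat.fib j := Nat.fib_pos.mpr (by omega)
  have hfj1pos : 0 < Nat.fib (j+1) := Nat.fib_pos.mpr (by omega)
  rcases Nat.lt_or_ge (n' + 1) (Nat.fib (j+3)) with h2 | h2
  · -- main case
    have h2' : n' + 2 ≤ Nat.fib (j+2+1) := by omega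
    have hrec := R_rec (show 3 ≤ j+2 by omega) hfk h2'
    set m1 := n' - Nat.fib (j+2) with hm1
    set m2 := Nat.fib (j+2+1) - 2 - n' with hm2
    have hm1lt : m1 < n' := by omega
    have hm2lt : m2 < n' := by
      have : Nat.fib (j+2+1) = Nat.fib (j+3) := rfl
      omega
    have IH1 : R m1 ^ 2 ≤ m1 + 1 := (ih m1 hm1lt).1
    have IH2 : R m2 ^ 2 ≤ m2 + 1 := (ih m2 hm2lt).1
    set a := m1 + 1 with ha
    set b := m2 + 1 with hb
    have hab : a + b = Nat.fib (j+1) := by omega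
    have hkey1 := (key_arith hj2 hab).1
    set r1 := R m1 with hr1
    set r2 := R m2 with hr2
    have hprod : (2*r1*r2)^2 ≤ (Nat.fib j + a)^2 := by
      have h1 : r1^2 * r2^2 ≤ a * b := Nat.mul_le_mul IH1 IH2
      calc (2*r1*r2)^2 = 4*(r1^2 * r2^2) := by ring
      _ ≤ 4*(a*b) := by omega
      _ = 4*a*b := by ring
      _ ≤ (Nat.fib j + a)^2 := hkey1
    have hcross : 2*r1*r2 ≤ Nat.fib j + a := sq_le_of_sq hprod
    have hRn : R n' = r1 + r2 := hrec
    have hsum : n' + 1 = Nat.fib (j+2) + a := by omega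
    constructor
    · rw [hRn]
      have : (r1+r2)^2 = r1^2 + r2^2 + 2*r1*r2 := by ring
      omega
    · intro heq
      rw [hRn] at heq
      have hexp : r1^2 + r2^2 + 2*r1*r2 = n' + 1 := by
        have : (r1+r2)^2 = r1^2 + r2^2 + 2*r1*r2 := by ring
        omega
      have hcr : 2*r1*r2 = Nat.fib j + a := by omega
      have h4ab : 4*a*b = (Nat.fib j + a)^2 := by
        have hle : (Nat.fib j + a)^2 ≤ 4*a*b := by
          have h1 : r1^2 * r2^2 ≤ a * b := Nat.mul_le_mul IH1 IH2
          calc (Nat.fib j + a)^2 = (2*r1*r2)^2 := by rw [hcr]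
          _ = 4*(r1^2*r2^2) := by ring
          _ ≤ 4*(a*b) := by omega
          _ = 4*a*b := by ring
        omega
      obtain ⟨i, hi1, hji, hai⟩ := (key_arith hj2 hab).2 h4ab
      refine ⟨i+2, by omega, ?_⟩
      have := fib_sq_even i
      rw [hsum, hai, hji]
      omega
  · -- edge case n' = fib (j+3) - 1
    have hrec := R_edge (show 3 ≤ j+2 by omega) hfk (show n' + 1 = Nat.fib (j+2+1) by omega)
    set m1 := n' - Nat.fib (j+2) with hm1
    have hm1lt : m1 < n' := by omega
    have IH1 : R m1 ^ 2 ≤ m1 + 1 := (ih m1 hm1lt).1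
    have : R n' ^ 2 ≤ n' := by
      rw [hrec]
      omega
    exact ⟨by omega, fun h => by omega⟩

lemma R_fib_s4 : ∀ m, 2 ≤ m → R (Nat.fib m ^ 2 - 1) = Nat.fib m := by
  intro m
  induction m using Nat.strong_induction_on with
  | _ m ih =>
  intro hm
  rcases Nat.lt_or_ge m 4 with hs | hb
  · interval_cases m
    · show R (Nat.fib 2 ^ 2 - 1) = Nat.fib 2
      norm_num [show Nat.fib 2 = 1 from rfl, R_zero]
    · show R (Nat.fib 3 ^ 2 - 1) = Nat.fib 3
      norm_num [show Nat.fib 3 = 2 from rfl, R_three]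
  · obtain ⟨j, rfl⟩ : ∃ j, m = j + 2 := ⟨m-2, by omega⟩
    have hj : 2 ≤ j := by omega
    set n := Nat.fib (j+2)^2 - 1 with hn
    have hfj : 1 ≤ Nat.fib j := Nat.fib_pos.mpr (by omega)
    have hfj1 : 1 ≤ Nat.fib (j+1) := Nat.fib_pos.mpr (by omega)
    have hfj2 : 1 ≤ Nat.fib (j+2) := Nat.fib_pos.mpr (by omega)
    have heven := fib_sq_even j
    have hodd := fib_sq_odd j
    have hI : Nat.fib (2*j+2+1) = Nat.fib (2*j+3) := by norm_num
    have hsq1 : 1 ≤ Nat.fib j ^ 2 := Nat.one_le_pow _ _ (by omega)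
    have hsq2 : 1 ≤ Nat.fib (j+1) ^ 2 := Nat.one_le_pow _ _ (by omega)
    have hsq3 : 1 ≤ Nat.fib (j+2) ^ 2 := Nat.one_le_pow _ _ (by omega)
    have h1 : Nat.fib (2*j+2) ≤ n := by omega
    have h2 : n + 2 ≤ Nat.fib (2*j+2+1) := by omega
    have hrec := R_rec (show 3 ≤ 2*j+2 by omega) h1 h2
    have e1 : n - Nat.fib (2*j+2) = Nat.fib j ^ 2 - 1 := by omega
    have e2 : Nat.fib (2*j+2+1) - 2 - n = Nat.fib (j+1) ^ 2 - 1 := by omega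
    rw [e1, e2] at hrec
    rw [hrec, ih j (by omega) hj, ih (j+1) (by omega) (by omega)]
    exact (Nat.fib_add_two).symm


theorem R_eq_sqrt_iff (n : ℕ) :
    (R n : ℝ) = Real.sqrt (n + 1) ↔ ∃ m : ℕ, 2 ≤ m ∧ n = Nat.fib m ^ 2 - 1 := by
  constructor
  · intro h
    have hsq : ((R n : ℝ))^2 = (n : ℝ) + 1 := by
      rw [h, Real.sq_sqrt (by positivity)]
    have hnat : R n ^ 2 = n + 1 := by exact_mod_cast hsq
    obtain ⟨m, hm, hfm⟩ := (master n).2 hnat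
    have h1 : 1 ≤ Nat.fib m ^ 2 := Nat.one_le_pow _ _ (Nat.fib_pos.mpr (by omega))
    exact ⟨m, hm, by omega⟩
  · rintro ⟨m, hm, rfl⟩
    have hf1 : 1 ≤ Nat.fib m := Nat.fib_pos.mpr (by omega)
    have h1 : 1 ≤ Nat.fib m ^ 2 := Nat.one_le_pow _ _ (by omega)
    rw [R_fib_s4 m hm]
    have hcast : ((Nat.fib m ^ 2 - 1 : ℕ) : ℝ) + 1 = ((Nat.fib m : ℝ))^2 := by
      have h2 : (Nat.fib m ^ 2 - 1) + 1 = Nat.fib m ^ 2 := by omega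
      exact_mod_cast congrArg (Nat.cast (R := ℝ)) h2
    rw [hcast, Real.sqrt_sq (by positivity)]
end

section
/- For every integer n ≥ 2, R(F_n) = ⌊n/2⌋. -/
open Finset Nat

def IsFibRep (s : Finset ℕ) (n : ℕ) : Prop :=
  (∀ x ∈ s, 0 < x ∧ ∃ m, fib m = x) ∧ ∑ x ∈ s, x = n

abbrev FibRep (n : ℕ) : Type := {s : Finset ℕ // IsFibRep s n}

theorem R_eq_card_fibRep (n : ℕ) : R n = Nat.card (FibRep n) := rfl

theorem le_fib_of_lt_fib_succ {x k : ℕ} (hx : ∃ j, fib j = x) (h : x < fib (k + 1)) :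
    x ≤ fib k := by
  obtain ⟨j, rfl⟩ := hx
  refine fib_mono ?_
  by_contra! hj
  exact (fib_mono hj).not_gt h

theorem sum_lt_fib_of_forall_lt_fib {k : ℕ} {s : Finset ℕ} (hs : ∀ x ∈ s, ∃ j, fib j = x)
    (hlt : ∀ x ∈ s, x < fib (k + 1)) : ∑ x ∈ s, x < fib (k + 2) := by
  induction k generalizing s with
  | zero =>
    rw [sum_eq_zero fun x hx => by simpa using hlt x hx]
    simp
  | succ k ih =>
    have hle : ∀ x ∈ s, x ≤ fib (k + 1) := fun x hx => le_fib_of_lt_fib_succ (hs x hx) (hlt x hx)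
    have hrest : ∑ x ∈ s.erase (fib (k + 1)), x < fib (k + 2) :=
      ih (fun x hx => hs x (mem_of_mem_erase hx))
        (fun x hx => (hle x (mem_of_mem_erase hx)).lt_of_ne (ne_of_mem_erase hx))
    rw [show fib (k + 1 + 2) = fib (k + 1) + fib (k + 2) from fib_add_two]
    by_cases hmem : fib (k + 1) ∈ s
    · rw [← add_sum_erase s (fun x => x) hmem]
      omega
    · rw [erase_eq_of_notMem hmem] at hrest
      omega

namespace IsFibRep

variable {s : Finset ℕ} {n x : ℕ}

theorem le_of_mem (h : IsFibRep s n) (hx : x ∈ s) : x ≤ n :=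
  h.2 ▸ single_le_sum (f := fun x => x) (fun _ _ => Nat.zero_le _) hx

theorem eq_empty_of_zero (h : IsFibRep s 0) : s = ∅ := by
  rw [eq_empty_iff_forall_notMem]
  intro x hx
  exact (h.1 x hx).1.ne' (Nat.le_zero.1 (h.le_of_mem hx))

theorem erase (h : IsFibRep s n) (hx : x ∈ s) : IsFibRep (s.erase x) (n - x) := by
  refine ⟨fun y hy => h.1 y (mem_of_mem_erase hy), ?_⟩
  rw [← h.2, ← add_sum_erase s (fun x => x) hx]
  omega

theorem insert_fib {m : ℕ} (hm : 0 < m) (h : IsFibRep s n) (hx : fib m ∉ s) :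
    IsFibRep (insert (fib m) s) (fib m + n) := by
  refine ⟨fun y hy => ?_, by rw [sum_insert hx, h.2]⟩
  rcases mem_insert.1 hy with rfl | hy
  · exact ⟨fib_pos.2 hm, m, rfl⟩
  · exact h.1 y hy

theorem singleton_fib {m : ℕ} (hm : 0 < m) : IsFibRep {fib m} (fib m) :=
  ⟨fun _ hy => mem_singleton.1 hy ▸ ⟨fib_pos.2 hm, m, rfl⟩, sum_singleton _ _⟩

theorem fib_succ_notMem {k : ℕ} (hk : 2 ≤ k) (h : IsFibRep s (fib k)) : fib (k + 1) ∉ s :=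
  fun hmem => (fib_lt_fib_succ hk).not_ge (h.le_of_mem hmem)

theorem eq_singleton_or_erase {k : ℕ} (h : IsFibRep s (fib (k + 2))) :
    s = {fib (k + 2)} ∨ fib (k + 1) ∈ s ∧ IsFibRep (s.erase (fib (k + 1))) (fib k) := by
  obtain ⟨x, hxs, hx⟩ : ∃ x ∈ s, fib (k + 1) ≤ x := by
    by_contra! hlt
    exact (sum_lt_fib_of_forall_lt_fib (fun x hx => (h.1 x hx).2) hlt).ne h.2
  rcases (h.le_of_mem hxs).eq_or_lt with rfl | hlt
  · left
    have hrest : IsFibRep (s.erase (fib (k + 2))) 0 := by simpa using h.erase hxs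
    rw [← insert_erase hxs, hrest.eq_empty_of_zero]
    rfl
  · obtain rfl : x = fib (k + 1) := (le_fib_of_lt_fib_succ (h.1 x hxs).2 hlt).antisymm hx
    refine .inr ⟨hxs, ?_⟩
    convert h.erase hxs using 1
    rw [fib_add_two]
    omega

theorem eq_singleton_one (h : IsFibRep s 1) : s = {1} := by
  rcases eq_singleton_or_erase (k := 0) h with hs | ⟨hmem, hrest⟩
  · exact hs
  · rw [← insert_erase hmem, hrest.eq_empty_of_zero]
    rfl

theorem eq_singleton_two (h : IsFibRep s 2) : s = {2} := by
  rcases eq_singleton_or_erase (k := 1) h with hs | ⟨-, hrest⟩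
  · exact hs
  · have h1 : s.erase 1 = {1} := eq_singleton_one hrest
    exact absurd (h1 ▸ mem_singleton_self 1) (notMem_erase 1 s)

end IsFibRep

theorem card_fibRep_eq_one_of_forall_eq {m : ℕ} (hm : 0 < m)
    (h : ∀ s, IsFibRep s (fib m) → s = {fib m}) : Nat.card (FibRep (fib m)) = 1 :=
  Nat.card_eq_one_iff_exists.2 ⟨⟨_, .singleton_fib hm⟩, fun s => Subtype.ext (h s.1 s.2)⟩

instance (n : ℕ) : Finite (FibRep n) :=
  Set.Finite.to_subtype <| (range (n + 1)).powerset.finite_toSet.subset fun _ hs =>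
    mem_powerset.2 fun _ hx => mem_range.2 (Nat.lt_succ_of_le (IsFibRep.le_of_mem hs hx))

def fibRepEquiv {k : ℕ} (hk : 2 ≤ k) : FibRep (fib (k + 2)) ≃ Option (FibRep (fib k)) where
  toFun s := if h : s.1 = {fib (k + 2)} then none
    else some ⟨s.1.erase (fib (k + 1)), (s.2.eq_singleton_or_erase.resolve_left h).2⟩
  invFun
    | none => ⟨{fib (k + 2)}, .singleton_fib (by omega)⟩
    | some t => ⟨insert (fib (k + 1)) t.1, by
        simpa [fib_add_two (n := k), add_comm]
          using t.2.insert_fib (by omega) (t.2.fib_succ_notMem hk)⟩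
  left_inv s := by
    by_cases h : s.1 = {fib (k + 2)}
    · simp only [h, dite_true]
      exact Subtype.ext h.symm
    · simp only [h, dite_false]
      exact Subtype.ext (insert_erase (s.2.eq_singleton_or_erase.resolve_left h).1)
  right_inv
    | none => by simp
    | some t => by
        have hne : insert (fib (k + 1)) t.1 ≠ {fib (k + 2)} := fun heq => by
          have := heq ▸ mem_insert_self (fib (k + 1)) t.1
          exact (fib_lt_fib_succ (by omega : 2 ≤ k + 1)).ne (mem_singleton.1 this)
        simp only [hne, dite_false]
        exact congrArg some (Subtype.ext (erase_insert (t.2.fib_succ_notMem hk)))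

theorem card_fibRep_fib_add_two (k : ℕ) : Nat.card (FibRep (fib (k + 2))) = (k + 2) / 2 := by
  induction k using Nat.twoStepInduction with
  | zero => exact card_fibRep_eq_one_of_forall_eq (by omega) fun _ h => h.eq_singleton_one
  | one => exact card_fibRep_eq_one_of_forall_eq (by omega) fun _ h => h.eq_singleton_two
  | more k ih _ =>
    rw [Nat.card_congr (fibRepEquiv (k := k + 2) (by omega)), Finite.card_option, ih]
    omega

theorem R_fib (n : ℕ) (hn : 2 ≤ n) : R (Nat.fib n) = n / 2 := by
  obtain ⟨k, rfl⟩ := Nat.exists_eq_add_of_le' hn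
  rw [R_eq_card_fibRep, card_fibRep_fib_add_two]
end

section
/- V(F_m) ~ c₁ λ₁^m as m → ∞ for some constant c₁ > 0, where λ₁ ≈ 2.48 is the greatest root of x^3 − 2x^2 − 2x + 2; i.e., V(F_m)/λ₁^m converges to a positive limit. -/
open Finset Filter Topology

section Autocorrelation

def autocorr (f : ℕ → ℕ) (K d : ℕ) : ℕ := ∑ n ∈ range K, f (n + d) * f n

lemma sum_range_add_ite_le (g : ℕ → ℕ) (a M : ℕ) :
    ∑ n ∈ range (a + M), (if a ≤ n then g (n - a) else 0) = ∑ k ∈ range M, g k := by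
  rw [sum_range_add, sum_eq_zero fun n hn => if_neg (by simpa using hn), zero_add]
  simp

variable {f : ℕ → ℕ} {K : ℕ} (hf : ∀ n ≥ K, f n = 0)
include hf

lemma autocorr_eq_sum_range {N d : ℕ} (hN : K ≤ N + d) :
    ∑ n ∈ range N, f (n + d) * f n = autocorr f K d := by
  have hvanish : ∀ n ≥ K - d, f (n + d) * f n = 0 := fun n hn => by
    rw [hf (n + d) (by omega), zero_mul]
  exact (eventually_constant_sum hvanish (by omega)).trans
    (eventually_constant_sum hvanish (by omega)).symm

lemma autocorr_eq_zero {d : ℕ} (hd : K ≤ d) : autocorr f K d = 0 :=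
  sum_eq_zero fun n _ => by rw [hf (n + d) (by omega), zero_mul]

lemma sum_range_shift_mul {a d : ℕ} :
    ∑ n ∈ range (K + a), (if a ≤ n + d then f (n + d - a) else 0) * f n =
      autocorr f K (Nat.dist d a) := by
  rcases le_or_gt a d with had | had
  · rw [Nat.dist_eq_sub_of_le_right had, ← autocorr_eq_sum_range hf (N := K + a) (by omega)]
    refine sum_congr rfl fun n _ => ?_
    rw [if_pos (by omega), Nat.add_sub_assoc had]
  · have hdist : Nat.dist d a = a - d := Nat.dist_eq_sub_of_le had.le
    have hshift : ∀ n, (if a ≤ n + d then f (n + d - a) else 0) * f n =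
        if a - d ≤ n then f (n - (a - d) + (a - d)) * f (n - (a - d)) else 0 := fun n => by
      split_ifs with h₁ h₂ h₂ <;> first | omega | skip
      · rw [Nat.sub_add_cancel h₂, mul_comm, show n + d - a = n - (a - d) by omega]
    rw [hdist, ← autocorr_eq_sum_range hf (N := K + d) (by omega),
      sum_congr rfl fun n _ => hshift n, show K + a = (a - d) + (K + d) by omega,
      sum_range_add_ite_le (fun k => f (k + (a - d)) * f k)]

lemma autocorr_add_shift (a d : ℕ) :
    autocorr (fun n => f n + if a ≤ n then f (n - a) else 0) (K + a) d =
      2 * autocorr f K d + autocorr f K (d + a) + autocorr f K (Nat.dist d a) := by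
  have hff : ∑ n ∈ range (K + a), f (n + d) * f n = autocorr f K d :=
    autocorr_eq_sum_range hf (by omega)
  have hfS : ∑ n ∈ range (K + a), f (n + d) * (if a ≤ n then f (n - a) else 0) =
      autocorr f K (d + a) := by
    rw [autocorr, add_comm K, ← sum_range_add_ite_le (fun k => f (k + (d + a)) * f k)]
    refine sum_congr rfl fun n _ => ?_
    split_ifs with h
    · rw [show n - a + (d + a) = n + d by omega]
    · rw [mul_zero]
  have hSS : ∑ n ∈ range (K + a), (if a ≤ n + d then f (n + d - a) else 0) *
      (if a ≤ n then f (n - a) else 0) = autocorr f K d := by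
    rw [autocorr, add_comm K, ← sum_range_add_ite_le (fun k => f (k + d) * f k)]
    refine sum_congr rfl fun n _ => ?_
    split_ifs with h h' <;> first | omega | skip
    rw [show n + d - a = n - a + d by omega]
  rw [autocorr]
  simp only [add_mul, mul_add, sum_add_distrib]
  rw [hff, hfS, hSS, sum_range_shift_mul hf]
  ring

end Autocorrelation

/-- The number of subsets of `{F₂, …, F_{j+1}}` with sum `n`. -/
def fibRepCount : ℕ → ℕ → ℕ
  | 0, n => if n = 0 then 1 else 0
  | j + 1, n =>
    fibRepCount j n + if Nat.fib (j + 2) ≤ n then fibRepCount j (n - Nat.fib (j + 2)) else 0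

lemma fibRepCount_succ (j n : ℕ) : fibRepCount (j + 1) n =
    fibRepCount j n + if Nat.fib (j + 2) ≤ n then fibRepCount j (n - Nat.fib (j + 2)) else 0 :=
  rfl

lemma fibRepCount_zero_right (j : ℕ) : fibRepCount j 0 = 1 := by
  induction j with
  | zero => rfl
  | succ j ih => simp [fibRepCount_succ, ih]

lemma fibRepCount_eq_zero {j n : ℕ} (hn : Nat.fib (j + 3) ≤ n) : fibRepCount j n = 0 := by
  induction j generalizing n with
  | zero =>
    have : n ≠ 0 := by rw [show Nat.fib 3 = 2 by rfl] at hn; omega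
    simp [fibRepCount, this]
  | succ j ih =>
    have hfib : Nat.fib (j + 1 + 3) = Nat.fib (j + 2) + Nat.fib (j + 3) := Nat.fib_add_two
    rw [fibRepCount_succ, ih (by omega), zero_add]
    split_ifs
    exacts [ih (by omega), rfl]

def fibSet (j : ℕ) : Finset ℕ := (Icc 2 (j + 1)).image Nat.fib

lemma fibSet_succ (j : ℕ) : fibSet (j + 1) = insert (Nat.fib (j + 2)) (fibSet j) := by
  rw [fibSet, fibSet, ← image_insert,
    ← insert_Icc_right_eq_Icc_add_one (a := 2) (b := j + 1) (by omega)]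
  rfl

lemma fib_add_two_notMem_fibSet (j : ℕ) : Nat.fib (j + 2) ∉ fibSet j := by
  simp only [fibSet, mem_image, mem_Icc, not_exists, not_and]
  rintro k ⟨hk2, hkj⟩
  exact ((Nat.fib_lt_fib hk2).2 (show k < j + 2 by omega)).ne

lemma card_filter_powerset_fibSet (j n : ℕ) :
    #{s ∈ (fibSet j).powerset | ∑ x ∈ s, x = n} = fibRepCount j n := by
  induction j generalizing n with
  | zero => by_cases hn : n = 0 <;> simp [fibSet, fibRepCount, filter_singleton, hn, eq_comm]
  | succ j ih =>
    have hnotMem := fib_add_two_notMem_fibSet j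
    rw [card_filter, fibSet_succ, sum_powerset_insert hnotMem, ← card_filter, ih,
      fibRepCount_succ]
    congr 1
    have hsum : ∀ t ∈ (fibSet j).powerset, ∑ x ∈ insert (Nat.fib (j + 2)) t, x =
        Nat.fib (j + 2) + ∑ x ∈ t, x := fun t ht =>
      sum_insert fun h => hnotMem (mem_powerset.1 ht h)
    rw [sum_congr rfl fun t ht => by rw [hsum t ht]]
    split_ifs with h
    · rw [← ih, card_filter]
      exact sum_congr rfl fun t _ => by congr 1; exact propext (by omega)
    · exact sum_eq_zero fun t _ => if_neg (by omega)

lemma mem_fibSet_iff {j x : ℕ} (hx : x < Nat.fib (j + 2)) :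
    x ∈ fibSet j ↔ 0 < x ∧ ∃ m, Nat.fib m = x := by
  simp only [fibSet, mem_image, mem_Icc]
  constructor
  · rintro ⟨m, ⟨hm, -⟩, rfl⟩
    exact ⟨Nat.fib_pos.2 (by omega), m, rfl⟩
  · rintro ⟨hx0, m, rfl⟩
    obtain ⟨k, hk2, hk⟩ : ∃ k, 2 ≤ k ∧ Nat.fib k = Nat.fib m := by
      rcases m with _ | _ | m
      · simp at hx0
      · exact ⟨2, le_rfl, rfl⟩
      · exact ⟨m + 2, by omega, rfl⟩
    rw [← hk] at hx ⊢
    exact ⟨k, ⟨hk2, by have := (Nat.fib_lt_fib hk2).1 hx; omega⟩, rfl⟩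

lemma R_eq_fibRepCount {j n : ℕ} (hn : n < Nat.fib (j + 2)) : R n = fibRepCount j n := by
  rw [← card_filter_powerset_fibSet, R, ← Nat.card_eq_finsetCard]
  refine Nat.card_congr (Equiv.subtypeEquivRight fun s => ?_)
  simp only [mem_filter, mem_powerset, and_congr_left_iff]
  intro hs
  have hle : ∀ x ∈ s, x < Nat.fib (j + 2) := fun x hx =>
    lt_of_le_of_lt (hs ▸ single_le_sum (f := fun x => x) (fun _ _ => Nat.zero_le _) hx) hn
  exact ⟨fun h x hx => (mem_fibSet_iff (hle x hx)).2 (h x hx),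
    fun h x hx => (mem_fibSet_iff (hle x hx)).1 (h hx)⟩

lemma R_fib_add_four (k : ℕ) : R (Nat.fib (k + 4)) = R (Nat.fib (k + 2)) + 1 := by
  have hfib : Nat.fib (k + 4) = Nat.fib (k + 2) + Nat.fib (k + 3) := Nat.fib_add_two
  rw [R_eq_fibRepCount (j := k + 3) (Nat.fib_lt_fib_succ (by omega)),
    R_eq_fibRepCount (j := k + 1) (Nat.fib_lt_fib_succ (by omega)), fibRepCount_succ,
    fibRepCount_succ, if_pos le_rfl, Nat.sub_self, fibRepCount_zero_right,
    fibRepCount_eq_zero le_rfl, if_pos (Nat.fib_mono (by omega)),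
    show Nat.fib (k + 4) - Nat.fib (k + 3) = Nat.fib (k + 2) by omega, zero_add]

lemma R_fib_add_two (k : ℕ) : R (Nat.fib (k + 2)) = k / 2 + 1 := by
  induction k using Nat.twoStepInduction with
  | zero => rw [R_eq_fibRepCount (j := 1) (by decide)]; decide
  | one => rw [R_eq_fibRepCount (j := 2) (by decide)]; decide
  | more k ih _ => rw [R_fib_add_four, ih]; omega

/-- The number of pairs `(S, T)` of subsets of `{F₂, …, F_{j+1}}` with `ΣS = ΣT + d`. -/
def fibCorr (j d : ℕ) : ℕ := autocorr (fibRepCount j) (Nat.fib (j + 3)) d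

lemma fibCorr_eq_zero {j d : ℕ} (hd : Nat.fib (j + 3) ≤ d) : fibCorr j d = 0 :=
  autocorr_eq_zero (fun _ => fibRepCount_eq_zero) hd

lemma fibCorr_succ (j d : ℕ) : fibCorr (j + 1) d =
    2 * fibCorr j d + fibCorr j (d + Nat.fib (j + 2)) +
      fibCorr j (d.dist (Nat.fib (j + 2))) := by
  have hfib : Nat.fib (j + 1 + 3) = Nat.fib (j + 3) + Nat.fib (j + 2) := by
    rw [show j + 1 + 3 = j + 2 + 2 by rfl, Nat.fib_add_two, add_comm]
  rw [fibCorr, hfib]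
  exact autocorr_add_shift (fun _ => fibRepCount_eq_zero) _ d

lemma fibCorr_succ_zero (j : ℕ) :
    fibCorr (j + 1) 0 = 2 * fibCorr j 0 + 2 * fibCorr j (Nat.fib (j + 2)) := by
  rw [fibCorr_succ, zero_add, Nat.dist_zero_left]
  ring

lemma fibCorr_succ_fib_add_three (j : ℕ) :
    fibCorr (j + 1) (Nat.fib (j + 3)) = fibCorr j (Nat.fib (j + 1)) := by
  have hfib : Nat.fib (j + 3) = Nat.fib (j + 1) + Nat.fib (j + 2) := Nat.fib_add_two
  rw [fibCorr_succ, fibCorr_eq_zero le_rfl, fibCorr_eq_zero (by omega),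
    Nat.dist_eq_sub_of_le_right (by omega),
    show Nat.fib (j + 3) - Nat.fib (j + 2) = Nat.fib (j + 1) by omega]
  ring

lemma fibCorr_succ_fib_add_two (j : ℕ) :
    fibCorr (j + 1) (Nat.fib (j + 2)) = fibCorr j 0 + 2 * fibCorr j (Nat.fib (j + 2)) := by
  have hfib : Nat.fib (j + 3) = Nat.fib (j + 1) + Nat.fib (j + 2) := Nat.fib_add_two
  have hmono : Nat.fib (j + 1) ≤ Nat.fib (j + 2) := Nat.fib_mono (by omega)
  rw [fibCorr_succ, fibCorr_eq_zero (d := Nat.fib (j + 2) + Nat.fib (j + 2)) (by omega),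
    Nat.dist_self]
  ring

lemma fibCorr_zero_add_three (j : ℕ) :
    fibCorr (j + 3) 0 + 2 * fibCorr j 0 = 2 * fibCorr (j + 2) 0 + 2 * fibCorr (j + 1) 0 := by
  have h₁ : fibCorr (j + 3) 0 = 2 * fibCorr (j + 2) 0 + 2 * fibCorr (j + 2) (Nat.fib (j + 4)) :=
    fibCorr_succ_zero (j + 2)
  have h₂ : fibCorr (j + 2) (Nat.fib (j + 4)) = fibCorr (j + 1) (Nat.fib (j + 2)) :=
    fibCorr_succ_fib_add_three (j + 1)
  have h₃ := fibCorr_succ_fib_add_two j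
  have h₄ := fibCorr_succ_zero j
  omega

noncomputable def sumSqR (H : ℕ) : ℕ := ∑ n ∈ range H, R n ^ 2

lemma V_eq_sumSqR_add (H : ℕ) : V H = sumSqR H + R H ^ 2 := sum_range_succ _ _

lemma sumSqR_fib_add_three (j : ℕ) : sumSqR (Nat.fib (j + 3)) =
    sumSqR (Nat.fib (j + 1)) + fibCorr j 0 + 2 * fibCorr j (Nat.fib (j + 2)) := by
  set a := Nat.fib (j + 2)
  set Q := fibRepCount j
  have hfib : Nat.fib (j + 3) = a + Nat.fib (j + 1) := Nat.fib_add_two.trans (add_comm _ _)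
  have hmono : Nat.fib (j + 1) ≤ a := Nat.fib_mono (by omega)
  have hR : ∀ n ∈ range (Nat.fib (j + 3)),
      R n ^ 2 = Q n ^ 2 + 2 * ((if a ≤ n then Q (n - a) else 0) * Q n) +
        (if a ≤ n then Q (n - a) ^ 2 else 0) := fun n hn => by
    rw [R_eq_fibRepCount (j := j + 1) (mem_range.1 hn), fibRepCount_succ, add_sq]
    split_ifs <;> ring
  have hQ : ∑ n ∈ range (Nat.fib (j + 3)), Q n ^ 2 = fibCorr j 0 := by
    simp only [fibCorr, autocorr, add_zero, sq, Q]
  have hQS : ∑ n ∈ range (Nat.fib (j + 3)), (if a ≤ n then Q (n - a) else 0) * Q n =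
      fibCorr j a := by
    rw [fibCorr, ← autocorr_eq_sum_range (fun _ => fibRepCount_eq_zero) (N := Nat.fib (j + 1))
      (by omega), hfib, ← sum_range_add_ite_le (fun k => Q (k + a) * Q k)]
    refine sum_congr rfl fun n _ => ?_
    split_ifs with h
    · rw [Nat.sub_add_cancel h, mul_comm]
    · rw [zero_mul]
  have hS : ∑ n ∈ range (Nat.fib (j + 3)), (if a ≤ n then Q (n - a) ^ 2 else 0) =
      sumSqR (Nat.fib (j + 1)) := by
    rw [hfib, sum_range_add_ite_le (fun k => Q k ^ 2), sumSqR]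
    exact sum_congr rfl fun n hn => by
      rw [R_eq_fibRepCount (j := j) (lt_of_lt_of_le (mem_range.1 hn) hmono)]
  rw [sumSqR, sum_congr rfl hR, sum_add_distrib, sum_add_distrib, ← mul_sum, hQ, hQS, hS]
  ring

lemma sumSqR_fib_add_two (j : ℕ) : sumSqR (Nat.fib (j + 2)) + 3 * fibCorr (j + 1) 0 =
    fibCorr (j + 2) 0 + 2 * fibCorr j 0 + (j + 1) % 2 := by
  induction j using Nat.twoStepInduction with
  | zero =>
    rw [sumSqR, show Nat.fib 2 = 1 by rfl, sum_range_one, R_eq_fibRepCount (j := 0) (by decide)]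
    decide
  | one =>
    rw [sumSqR, show Nat.fib 3 = 2 by rfl, sum_range_succ, sum_range_one,
      R_eq_fibRepCount (j := 0) (by decide), R_eq_fibRepCount (j := 1) (by decide)]
    decide
  | more j ih _ =>
    show sumSqR (Nat.fib (j + 4)) + 3 * fibCorr (j + 3) 0 =
      fibCorr (j + 4) 0 + 2 * fibCorr (j + 2) 0 + (j + 3) % 2
    have h₁ : sumSqR (Nat.fib (j + 4)) = sumSqR (Nat.fib (j + 2)) + fibCorr (j + 1) 0 +
        2 * fibCorr (j + 1) (Nat.fib (j + 3)) := sumSqR_fib_add_three (j + 1)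
    have h₂ : fibCorr (j + 2) 0 = 2 * fibCorr (j + 1) 0 + 2 * fibCorr (j + 1) (Nat.fib (j + 3)) :=
      fibCorr_succ_zero (j + 1)
    have h₃ := fibCorr_zero_add_three j
    have h₄ : fibCorr (j + 4) 0 + 2 * fibCorr (j + 1) 0 =
        2 * fibCorr (j + 3) 0 + 2 * fibCorr (j + 2) 0 := fibCorr_zero_add_three (j + 1)
    omega

lemma V_fib_add_two (j : ℕ) : V (Nat.fib (j + 2)) + 3 * fibCorr (j + 1) 0 =
    fibCorr (j + 2) 0 + 2 * fibCorr j 0 + ((j + 1) % 2 + (j / 2 + 1) ^ 2) := by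
  rw [V_eq_sumSqR_add, R_fib_add_two, ← add_assoc, add_right_comm, sumSqR_fib_add_two]

lemma abs_le_mul_pow_of_two_step {u : ℕ → ℝ} {b c ρ : ℝ} (hρ : 1 ≤ ρ)
    (hbc : |b| * ρ + |c| ≤ ρ ^ 2) (hu : ∀ n, u (n + 2) = b * u (n + 1) + c * u n) (n : ℕ) :
    |u n| ≤ (|u 0| + |u 1|) * ρ ^ n := by
  set C := |u 0| + |u 1|
  induction n using Nat.twoStepInduction with
  | zero => simp [C, abs_nonneg]
  | one => nlinarith [abs_nonneg (u 0), abs_nonneg (u 1)]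
  | more n ih₀ ih₁ =>
    have hpow : 0 ≤ C * ρ ^ n := by positivity
    calc |u (n + 2)| ≤ |b| * |u (n + 1)| + |c| * |u n| := by
          rw [hu, ← abs_mul, ← abs_mul]; exact abs_add_le _ _
      _ ≤ |b| * (C * ρ ^ (n + 1)) + |c| * (C * ρ ^ n) := by gcongr
      _ = C * ρ ^ n * (|b| * ρ + |c|) := by ring
      _ ≤ C * ρ ^ n * ρ ^ 2 := by gcongr
      _ = C * ρ ^ (n + 2) := by ring

lemma tendsto_div_pow_of_recurrence {x : ℕ → ℝ} {l : ℝ}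
    (hx : ∀ j, x (j + 3) = 2 * x (j + 2) + 2 * x (j + 1) - 2 * x j)
    (hroot : l ^ 3 - 2 * l ^ 2 - 2 * l + 2 = 0) (hl : 2 < l) :
    Tendsto (fun j => x j / l ^ j) atTop
      (𝓝 ((x 2 + (l - 2) * x 1 + (l ^ 2 - 2 * l - 2) * x 0) / (3 * l ^ 2 - 4 * l - 2))) := by
  set w : ℕ → ℝ := fun j => x (j + 2) + (l - 2) * x (j + 1) + (l ^ 2 - 2 * l - 2) * x j
  set γ := w 0 / (3 * l ^ 2 - 4 * l - 2)
  -- `X² + (l - 2) X + (l² - 2l - 2) = (X³ - 2X² - 2X + 2) / (X - l)`, so `w` is geometric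
  -- with ratio `l`, and `u` only involves the two other roots
  have hw : ∀ j, w j = w 0 * l ^ j := by
    intro j
    induction j with
    | zero => simp
    | succ j ih =>
      rw [pow_succ, ← mul_assoc, ← ih]
      simp only [w]
      linear_combination hx j - x j * hroot
  have hγ : γ * (3 * l ^ 2 - 4 * l - 2) = w 0 := div_mul_cancel₀ _ (by nlinarith)
  set u : ℕ → ℝ := fun j => x j - γ * l ^ j
  have hu : ∀ j, u (j + 2) = (2 - l) * u (j + 1) + (2 + 2 * l - l ^ 2) * u j := by
    intro j
    have := hw j
    simp only [u, w] at this ⊢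
    linear_combination this - l ^ j * hγ
  have hl3 : l < 3 := by nlinarith
  have hbc : |2 - l| * 2 + |2 + 2 * l - l ^ 2| ≤ 2 ^ 2 := by
    rw [abs_of_neg (by linarith)]
    cases abs_cases (2 + 2 * l - l ^ 2) <;> nlinarith
  have hu0 : Tendsto (fun j => u j / l ^ j) atTop (𝓝 0) := by
    have hgeom : Tendsto (fun j => (|u 0| + |u 1|) * (2 / l) ^ j) atTop (𝓝 0) := by
      simpa using (tendsto_pow_atTop_nhds_zero_of_lt_one (by positivity)
        ((div_lt_one (by positivity)).2 hl)).const_mul (|u 0| + |u 1|)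
    refine squeeze_zero_norm (fun j => ?_) hgeom
    rw [norm_div, norm_pow, Real.norm_eq_abs, Real.norm_eq_abs,
      abs_of_pos (by positivity : 0 < l), div_pow, ← mul_div_assoc,
      div_le_div_iff_of_pos_right (by positivity)]
    exact abs_le_mul_pow_of_two_step one_le_two hbc hu j
  have hxu : (fun j => x j / l ^ j) = fun j => γ + u j / l ^ j := by
    ext j
    field_simp
    ring
  rw [hxu]
  simpa using hu0.const_add γ

lemma two_lt_of_forall_root_le {l : ℝ} (hroot : l ^ 3 - 2 * l ^ 2 - 2 * l + 2 = 0)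
    (hmax : ∀ x : ℝ, x ^ 3 - 2 * x ^ 2 - 2 * x + 2 = 0 → x ≤ l) : 2 < l := by
  obtain ⟨ξ, hξ, hξroot⟩ :
      ∃ ξ ∈ Set.Icc (2 : ℝ) 3, ξ ^ 3 - 2 * ξ ^ 2 - 2 * ξ + 2 = 0 :=
    intermediate_value_Icc (by norm_num) (by fun_prop) ⟨by norm_num, by norm_num⟩
  refine lt_of_le_of_ne (hξ.1.trans (hmax ξ hξroot)) ?_
  rintro rfl
  norm_num at hroot

lemma tendsto_fibCorr_div_pow {l : ℝ} (hroot : l ^ 3 - 2 * l ^ 2 - 2 * l + 2 = 0) (hl : 2 < l) :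
    Tendsto (fun j => (fibCorr j 0 : ℝ) / l ^ j) atTop
      (𝓝 ((l ^ 2 - 2) / (3 * l ^ 2 - 4 * l - 2))) := by
  have hrec : ∀ j, (fibCorr (j + 3) 0 : ℝ) =
      2 * fibCorr (j + 2) 0 + 2 * fibCorr (j + 1) 0 - 2 * fibCorr j 0 := fun j => by
    have h : (fibCorr (j + 3) 0 : ℝ) + 2 * fibCorr j 0 =
        2 * fibCorr (j + 2) 0 + 2 * fibCorr (j + 1) 0 := by
      exact_mod_cast fibCorr_zero_add_three j
    linarith
  have hinit : (fibCorr 2 0 : ℝ) + (l - 2) * fibCorr 1 0 + (l ^ 2 - 2 * l - 2) * fibCorr 0 0 =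
      l ^ 2 - 2 := by
    rw [show fibCorr 0 0 = 1 by decide, show fibCorr 1 0 = 2 by decide,
      show fibCorr 2 0 = 4 by decide]
    push_cast
    ring
  simpa only [hinit] using
    tendsto_div_pow_of_recurrence (x := fun j => (fibCorr j 0 : ℝ)) hrec hroot hl

lemma tendsto_parity_add_sq_div_pow {l : ℝ} (hl : 1 < l) :
    Tendsto (fun j : ℕ => (((j + 1) % 2 + (j / 2 + 1) ^ 2 : ℕ) : ℝ) / l ^ (j + 2)) atTop
      (𝓝 0) := by
  refine squeeze_zero (fun j => by positivity) (fun j => ?_)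
    ((tendsto_pow_const_div_const_pow_of_one_lt 2 hl).comp (tendsto_add_atTop_nat 2))
  show _ ≤ ((j + 2 : ℕ) : ℝ) ^ 2 / l ^ (j + 2)
  gcongr
  norm_cast
  have hmod : (j + 1) % 2 ≤ 1 := Nat.lt_succ_iff.1 (Nat.mod_lt _ two_pos)
  have hdiv : (j / 2 + 1) ^ 2 ≤ (j + 1) ^ 2 := Nat.pow_le_pow_left (by omega) 2
  have hsq : (j + 2) ^ 2 = (j + 1) ^ 2 + (2 * j + 3) := by ring
  omega

theorem V_fib_asymptotic (l : ℝ)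
    (hroot : l ^ 3 - 2 * l ^ 2 - 2 * l + 2 = 0)
    (hmax : ∀ x : ℝ, x ^ 3 - 2 * x ^ 2 - 2 * x + 2 = 0 → x ≤ l) :
    ∃ c : ℝ, 0 < c ∧
      Filter.Tendsto (fun m : ℕ => (V (Nat.fib m) : ℝ) / l ^ m) Filter.atTop (nhds c) := by
  have hl := two_lt_of_forall_root_le hroot hmax
  set γ := (l ^ 2 - 2) / (3 * l ^ 2 - 4 * l - 2)
  set x : ℕ → ℝ := fun j => (fibCorr j 0 : ℝ) / l ^ j
  set e : ℕ → ℝ := fun j => (((j + 1) % 2 + (j / 2 + 1) ^ 2 : ℕ) : ℝ) / l ^ (j + 2)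
  have hV : ∀ j, (V (Nat.fib (j + 2)) : ℝ) / l ^ (j + 2) =
      x (j + 2) - 3 / l * x (j + 1) + 2 / l ^ 2 * x j + e j := fun j => by
    have h : (V (Nat.fib (j + 2)) : ℝ) + 3 * fibCorr (j + 1) 0 = fibCorr (j + 2) 0 +
        2 * fibCorr j 0 + ((j + 1) % 2 + (j / 2 + 1) ^ 2 : ℕ) := by
      exact_mod_cast V_fib_add_two j
    have hl0 : l ≠ 0 := by positivity
    simp only [x, e]
    rw [eq_sub_of_add_eq h]
    field_simp
    ring
  have hx : Tendsto x atTop (𝓝 γ) := tendsto_fibCorr_div_pow hroot hl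
  refine ⟨γ * ((l - 1) * (l - 2) / l ^ 2), ?_, (tendsto_add_atTop_iff_nat 2).1 ?_⟩
  · have hγ : 0 < γ := div_pos (by nlinarith) (by nlinarith)
    exact mul_pos hγ (div_pos (mul_pos (by linarith) (by linarith)) (by positivity))
  · have hc : γ * ((l - 1) * (l - 2) / l ^ 2) = γ - 3 / l * γ + 2 / l ^ 2 * γ + 0 := by
      field_simp
      ring
    simp only [hV, hc]
    exact ((((tendsto_add_atTop_iff_nat 2).2 hx).sub
      (((tendsto_add_atTop_iff_nat 1).2 hx).const_mul _)).add (hx.const_mul _)).add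
      (tendsto_parity_add_sq_div_pow (by linarith))
end
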